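/- arXiv:1905.05930 — 2 statements merged into one kernel-verified Lean document; each statement's English description precedes it below -/
import Mathlib

section
/- The 27 three-qutrit product states |0⟩|1⟩|η±⟩, |1⟩|η±⟩|0⟩, |η±⟩|0⟩|1⟩, |0⟩|2⟩|κ±⟩, |2⟩|κ±⟩|0⟩, |κ±⟩|0⟩|2⟩, |1⟩|2⟩|η±⟩, |2⟩|η±⟩|1⟩, |η±⟩|1⟩|2⟩, |2⟩|1⟩|κ±⟩, |1⟩|κ±⟩|2⟩, |κ±⟩|2⟩|1⟩, and |k⟩|k⟩|k⟩ for k ∈ {0,1,2}, form an orthonormal basis of ℂ³ ⊗ ℂ³ ⊗ ℂ³. -/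
noncomputable section

abbrev V3 : Type := EuclideanSpace ℂ (Fin 3)
abbrev V333 : Type := EuclideanSpace ℂ (Fin 3 × Fin 3 × Fin 3)

def e3 (i : Fin 3) : V3 := EuclideanSpace.single i 1
def s2 : ℂ := Real.sqrt 2
def etaP : V3 := s2⁻¹ • (e3 0 + e3 1)
def etaM : V3 := s2⁻¹ • (e3 0 - e3 1)
def kapP : V3 := s2⁻¹ • (e3 0 + e3 2)
def kapM : V3 := s2⁻¹ • (e3 0 - e3 2)

/-- The tensor product `a ⊗ b ⊗ c ∈ (ℂ³)^⊗3`. -/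
def tp3 (a b c : V3) : V333 :=
  WithLp.toLp 2 (fun p : Fin 3 × Fin 3 × Fin 3 => a p.1 * b p.2.1 * c p.2.2)

/-- The basis `𝔹_II(b)(3,3)` of Halder et al. -/
def BIIb33 : Fin 27 → V333 :=
  ![tp3 (e3 0) (e3 1) etaP, tp3 (e3 0) (e3 1) etaM,
    tp3 (e3 1) etaP (e3 0), tp3 (e3 1) etaM (e3 0),
    tp3 etaP (e3 0) (e3 1), tp3 etaM (e3 0) (e3 1),
    tp3 (e3 0) (e3 2) kapP, tp3 (e3 0) (e3 2) kapM,
    tp3 (e3 2) kapP (e3 0), tp3 (e3 2) kapM (e3 0),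
    tp3 kapP (e3 0) (e3 2), tp3 kapM (e3 0) (e3 2),
    tp3 (e3 1) (e3 2) etaP, tp3 (e3 1) (e3 2) etaM,
    tp3 (e3 2) etaP (e3 1), tp3 (e3 2) etaM (e3 1),
    tp3 etaP (e3 1) (e3 2), tp3 etaM (e3 1) (e3 2),
    tp3 (e3 2) (e3 1) kapP, tp3 (e3 2) (e3 1) kapM,
    tp3 (e3 1) kapP (e3 2), tp3 (e3 1) kapM (e3 2),
    tp3 kapP (e3 2) (e3 1), tp3 kapM (e3 2) (e3 1),
    tp3 (e3 0) (e3 0) (e3 0), tp3 (e3 1) (e3 1) (e3 1), tp3 (e3 2) (e3 2) (e3 2)]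

/-! Inner products of product states factor party by party, so two states of the family are
orthogonal as soon as, in one party, their factors are distinct members of one of the orthonormal
bases `{|0⟩, |1⟩, |2⟩}`, `{|η+⟩, |η−⟩, |2⟩}`, `{|κ+⟩, |κ−⟩, |1⟩}`; checking the 27 × 27 pairs shows
this always happens. An orthonormal family of 27 vectors in a 27-dimensional space spans it. -/

open scoped InnerProductSpace ComplexConjugate

section Hadamard

variable {𝕜 E : Type*} [RCLike 𝕜] [NormedAddCommGroup E] [InnerProductSpace 𝕜 E]

theorem Orthonormal.hadamard {u v w : E} (h : Orthonormal 𝕜 ![u, v, w]) {c : 𝕜}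
    (hc : conj c * c = 2⁻¹) : Orthonormal 𝕜 ![c • (u + v), c • (u - v), w] := by
  have h' := orthonormal_iff_ite.mp h
  have huu : ⟪u, u⟫_𝕜 = 1 := h' 0 0
  have hvv : ⟪v, v⟫_𝕜 = 1 := h' 1 1
  have huv : ⟪u, v⟫_𝕜 = 0 := h' 0 1
  have hvu : ⟪v, u⟫_𝕜 = 0 := h' 1 0
  have hwu : ⟪w, u⟫_𝕜 = 0 := h' 2 0
  have hwv : ⟪w, v⟫_𝕜 = 0 := h' 2 1
  have huw : ⟪u, w⟫_𝕜 = 0 := h' 0 2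
  have hvw : ⟪v, w⟫_𝕜 = 0 := h' 1 2
  have hww : ⟪w, w⟫_𝕜 = 1 := h' 2 2
  rw [orthonormal_iff_ite]
  intro i j
  fin_cases i <;> fin_cases j <;>
    simp [inner_smul_left, inner_smul_right, inner_add_left, inner_add_right, inner_sub_left,
      inner_sub_right, huu, hvv, huv, hvu, hwu, hwv, huw, hvw, hww,
      -inner_self_eq_norm_sq_to_K] <;>
    linear_combination 2 * hc

end Hadamard

lemma inner_tp3 (a b c a' b' c' : V3) :
    ⟪tp3 a b c, tp3 a' b' c'⟫_ℂ = ⟪a, a'⟫_ℂ * ⟪b, b'⟫_ℂ * ⟪c, c'⟫_ℂ := by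
  simp only [PiLp.inner_apply, RCLike.inner_apply, tp3, map_mul, Fintype.sum_prod_type,
    Fin.sum_univ_three]
  ring

lemma orthonormal_e3 : Orthonormal ℂ e3 := EuclideanSpace.orthonormal_single

@[simp] lemma inner_e3 (i j : Fin 3) : ⟪e3 i, e3 j⟫_ℂ = if i = j then 1 else 0 :=
  orthonormal_iff_ite.mp orthonormal_e3 i j

lemma conj_s2_inv_mul_self : conj s2⁻¹ * s2⁻¹ = 2⁻¹ := by
  rw [s2, map_inv₀, Complex.conj_ofReal, ← mul_inv, ← Complex.ofReal_mul,
    Real.mul_self_sqrt zero_le_two]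
  norm_num

lemma orthonormal_eta : Orthonormal ℂ ![etaP, etaM, e3 2] := by
  refine Orthonormal.hadamard ?_ conj_s2_inv_mul_self
  have : ![e3 0, e3 1, e3 2] = e3 := by ext i : 1; fin_cases i <;> rfl
  rw [this]
  exact orthonormal_e3

lemma orthonormal_kap : Orthonormal ℂ ![kapP, kapM, e3 1] := by
  refine Orthonormal.hadamard ?_ conj_s2_inv_mul_self
  have : ![e3 0, e3 2, e3 1] = e3 ∘ ![0, 2, 1] := by ext i : 1; fin_cases i <;> rfl
  rw [this]
  exact orthonormal_e3.comp _ (by decide)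

@[simp] lemma inner_eta :
    (⟪etaP, etaP⟫_ℂ = 1 ∧ ⟪etaM, etaM⟫_ℂ = 1 ∧ ⟪etaP, etaM⟫_ℂ = 0 ∧ ⟪etaM, etaP⟫_ℂ = 0) ∧
    (⟪e3 2, etaP⟫_ℂ = 0 ∧ ⟪e3 2, etaM⟫_ℂ = 0 ∧ ⟪etaP, e3 2⟫_ℂ = 0 ∧ ⟪etaM, e3 2⟫_ℂ = 0) :=
  have h := orthonormal_iff_ite.mp orthonormal_eta
  ⟨⟨h 0 0, h 1 1, h 0 1, h 1 0⟩, h 2 0, h 2 1, h 0 2, h 1 2⟩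

@[simp] lemma inner_kap :
    (⟪kapP, kapP⟫_ℂ = 1 ∧ ⟪kapM, kapM⟫_ℂ = 1 ∧ ⟪kapP, kapM⟫_ℂ = 0 ∧ ⟪kapM, kapP⟫_ℂ = 0) ∧
    (⟪e3 1, kapP⟫_ℂ = 0 ∧ ⟪e3 1, kapM⟫_ℂ = 0 ∧ ⟪kapP, e3 1⟫_ℂ = 0 ∧ ⟪kapM, e3 1⟫_ℂ = 0) :=
  have h := orthonormal_iff_ite.mp orthonormal_kap
  ⟨⟨h 0 0, h 1 1, h 0 1, h 1 0⟩, h 2 0, h 2 1, h 0 2, h 1 2⟩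

lemma orthonormal_BIIb33 : Orthonormal ℂ BIIb33 := by
  rw [orthonormal_iff_ite]
  intro i j
  fin_cases i <;> fin_cases j <;> simp [BIIb33, inner_tp3, -inner_self_eq_norm_sq_to_K]

/-- the 27 product states of `𝔹_II(b)(3,3)` form an orthonormal basis of
`ℂ³ ⊗ ℂ³ ⊗ ℂ³`. -/
theorem BIIb33_orthonormal_basis :
    Orthonormal ℂ BIIb33 ∧ Submodule.span ℂ (Set.range BIIb33) = ⊤ := by
  refine ⟨orthonormal_BIIb33, ?_⟩
  apply orthonormal_BIIb33.linearIndependent.span_eq_top_of_card_eq_finrank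
  simp [finrank_euclideanSpace]
end
end

section
/- For any positive semidefinite operator E on ℂ² that is not proportional to the identity, there exist two states among the eight-state completed Shift basis of (ℂ²)^⊗3 whose images under E ⊗ I ⊗ I (E acting on the first qubit) are not orthogonal. -/
noncomputable section
open Kronecker ComplexOrder

abbrev Q : Type := EuclideanSpace ℂ (Fin 2)
abbrev Q3 : Type := EuclideanSpace ℂ (Fin 2 × Fin 2 × Fin 2)

def e2 (i : Fin 2) : Q := EuclideanSpace.single i 1
def plus : Q := s2⁻¹ • (e2 0 + e2 1)
def minus : Q := s2⁻¹ • (e2 0 - e2 1)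

def tq3 (a b c : Q) : Q3 :=
  WithLp.toLp 2 (fun p : Fin 2 × Fin 2 × Fin 2 => a p.1 * b p.2.1 * c p.2.2)

/-- The completed Shift product basis of `(ℂ²)^⊗3`. -/
def shiftBasis : Fin 8 → Q3 :=
  ![tq3 (e2 0) (e2 1) plus, tq3 (e2 0) (e2 1) minus,
    tq3 (e2 1) plus (e2 0), tq3 (e2 1) minus (e2 0),
    tq3 plus (e2 0) (e2 1), tq3 minus (e2 0) (e2 1),
    tq3 (e2 0) (e2 0) (e2 0), tq3 (e2 1) (e2 1) (e2 1)]

/-!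
On product vectors `E ⊗ I ⊗ I` acts factorwise, so the images of two Shift states have inner
product `⟪E a, E a'⟫ ⟪b, b'⟫ ⟪c, c'⟫`, and `⟪E x, E y⟫ = ⟪x, EᴴE y⟫`. Orthogonality of the images
of `|0⟩|1⟩|+⟩` and `|1⟩|1⟩|1⟩` forces `(EᴴE)₀₁ = 0`, and that of `|+⟩|0⟩|1⟩` and `|−⟩|0⟩|1⟩`
forces `(EᴴE)₀₀ = (EᴴE)₁₁`. Hence `E * E = EᴴE = r • 1` with `r ≥ 0`, and by uniqueness of
positive square roots `E = √r • 1`.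
-/

open scoped MatrixOrder
open Matrix

theorem Matrix.PosSemidef.eq_of_mul_self_eq {𝕜 n : Type*} [RCLike 𝕜] [Fintype n] [DecidableEq n]
    {A B : Matrix n n 𝕜} (hA : A.PosSemidef) (hB : B.PosSemidef) (h : A * A = B * B) :
    A = B := by
  rw [← CFC.sqrt_unique rfl hA.nonneg, ← CFC.sqrt_unique rfl hB.nonneg, h]

theorem Matrix.PosSemidef.eq_smul_one_of_mul_self_eq {𝕜 n : Type*} [RCLike 𝕜] [Fintype n]
    [DecidableEq n] {A : Matrix n n 𝕜} (hA : A.PosSemidef) {r : ℝ} (hr : 0 ≤ r)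
    (h : A * A = (r : 𝕜) • 1) : A = (√r : 𝕜) • 1 := by
  refine hA.eq_of_mul_self_eq (PosSemidef.one.smul (by simp)) ?_
  rw [h, smul_mul_smul, one_mul, ← RCLike.ofReal_mul, Real.mul_self_sqrt hr]

theorem Matrix.inner_toEuclideanLin_single {𝕜 m n : Type*} [RCLike 𝕜] [Fintype m]
    [Fintype n] [DecidableEq n] (A : Matrix m n 𝕜) (i j : n) :
    inner 𝕜 (toEuclideanLin A (EuclideanSpace.single i 1))
      (toEuclideanLin A (EuclideanSpace.single j 1)) = (Aᴴ * A) i j := by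
  simp [EuclideanSpace.inner_eq_star_dotProduct, mul_apply, dotProduct, mul_comm]

theorem toEuclideanLin_kronecker_one_tq3 (E : Matrix (Fin 2) (Fin 2) ℂ) (a b c : Q) :
    toEuclideanLin (E ⊗ₖ (1 : Matrix (Fin 2 × Fin 2) (Fin 2 × Fin 2) ℂ)) (tq3 a b c)
      = tq3 (toEuclideanLin E a) b c := by
  ext ⟨i, k, l⟩
  simp [tq3, mulVec, dotProduct, Fintype.sum_prod_type, one_apply, Fin.sum_univ_two]
  ring

theorem inner_tq3 (a b c a' b' c' : Q) :
    inner ℂ (tq3 a b c) (tq3 a' b' c') = inner ℂ a a' * inner ℂ b b' * inner ℂ c c' := by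
  simp [tq3, EuclideanSpace.inner_eq_star_dotProduct, dotProduct, Fintype.sum_prod_type,
    Fin.sum_univ_two]
  ring

theorem inner_e2_self (i : Fin 2) : inner ℂ (e2 i) (e2 i) = 1 := by
  simp [e2]

theorem inner_plus_e2 (i : Fin 2) : inner ℂ plus (e2 i) = s2⁻¹ := by
  fin_cases i <;> simp [plus, e2, EuclideanSpace.inner_single_left, s2]

theorem inner_toEuclideanLin_plus_minus (E : Matrix (Fin 2) (Fin 2) ℂ) :
    inner ℂ (toEuclideanLin E plus) (toEuclideanLin E minus)
      = ((Eᴴ * E) 0 0 - (Eᴴ * E) 0 1 + (Eᴴ * E) 1 0 - (Eᴴ * E) 1 1) / 2 := by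
  have hs2 : (starRingEnd ℂ) s2⁻¹ * s2⁻¹ = 1 / 2 := by
    rw [s2, Complex.conj_inv, Complex.conj_ofReal, ← mul_inv, ← Complex.ofReal_mul,
      Real.mul_self_sqrt zero_le_two]
    norm_num
  simp only [plus, minus, e2, map_smul, map_add, map_sub, inner_smul_left, inner_smul_right,
    inner_add_left, inner_sub_right, inner_toEuclideanLin_single]
  linear_combination ((Eᴴ * E) 0 0 - (Eᴴ * E) 0 1 + (Eᴴ * E) 1 0 - (Eᴴ * E) 1 1) * hs2

/-- for any positive semidefinite `E` on `ℂ²` not proportional to the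
identity, some two states of the completed Shift basis have non-orthogonal images under
`E ⊗ I ⊗ I` (with `E` acting on the first qubit). -/
theorem shift_OPM_nontrivial_effect (E : Matrix (Fin 2) (Fin 2) ℂ) (hE : E.PosSemidef)
    (hne : ¬∃ c : ℂ, E = c • (1 : Matrix (Fin 2) (Fin 2) ℂ)) :
    ∃ i j : Fin 8, i ≠ j ∧
      (inner ℂ
        (Matrix.toEuclideanLin (E ⊗ₖ (1 : Matrix (Fin 2 × Fin 2) (Fin 2 × Fin 2) ℂ))
          (shiftBasis i))
        (Matrix.toEuclideanLin (E ⊗ₖ (1 : Matrix (Fin 2 × Fin 2) (Fin 2 × Fin 2) ℂ))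
          (shiftBasis j)) : ℂ) ≠ 0 := by
  by_contra! horth
  have hG : (Eᴴ * E).PosSemidef := posSemidef_conjTranspose_mul_self E
  have h01 : (Eᴴ * E) 0 1 = 0 := by
    have h := horth 0 7 (by decide)
    simp only [shiftBasis, Matrix.cons_val, toEuclideanLin_kronecker_one_tq3, inner_tq3,
      inner_e2_self, inner_plus_e2, mul_one] at h
    simpa [e2, inner_toEuclideanLin_single, s2] using h
  have h10 : (Eᴴ * E) 1 0 = 0 := by simpa [h01] using (hG.1.apply 1 0).symm
  have h11 : (Eᴴ * E) 1 1 = (Eᴴ * E) 0 0 := by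
    have h := horth 4 5 (by decide)
    simp only [shiftBasis, Matrix.cons_val, toEuclideanLin_kronecker_one_tq3, inner_tq3,
      inner_e2_self, mul_one, inner_toEuclideanLin_plus_minus, h01, h10] at h
    linear_combination -2 * h
  obtain ⟨r, hr, hr00⟩ := RCLike.nonneg_iff_exists_ofReal.1 (hG.diag_nonneg (i := 0))
  have hsq : E * E = (r : ℂ) • 1 := by
    nth_rewrite 1 [← hE.1.eq]
    ext i j
    fin_cases i <;> fin_cases j <;> simp [h01, h10, h11, ← hr00]
  exact hne ⟨_, hE.eq_smul_one_of_mul_self_eq hr hsq⟩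
end
end
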